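/- Classic Propose-Test-Release is (2ε, δ)-DP: the algorithm that computes D_β(X), the Hamming distance from X to the nearest dataset whose local sensitivity exceeds β, outputs ⊥ if D_β(X) + Lap(1/ε) ≤ log(1/δ)/ε, and otherwise releases f(X) + Lap(β/ε), satisfies (2ε, δ)-differential privacy. -/

import Mathlib

open MeasureTheory Real ENNReal

variable {𝒳 : Type*} [Fintype 𝒳] [DecidableEq 𝒳] [Nonempty 𝒳] {n : ℕ}

/-- The Laplace measure with center `m` and scale `b`. -/
noncomputable def lapMeasure (m b : ℝ) : Measure ℝ :=
  volume.withDensity (fun t => ENNReal.ofReal ((1 / (2 * b)) * Real.exp (-|t - m| / b)))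

/-- Local sensitivity of `f` at dataset `X`. -/
noncomputable def localSens (f : (Fin n → 𝒳) → ℝ) (X : Fin n → 𝒳) : ℝ :=
  ⨆ Y : {Y : Fin n → 𝒳 // hammingDist X Y ≤ 1}, |f X - f Y.1|

/-- `D_β(X)`: the Hamming distance from `X` to the nearest dataset whose local
sensitivity exceeds `β`. -/
noncomputable def distToUnsafe (f : (Fin n → 𝒳) → ℝ) (β : ℝ) (X : Fin n → 𝒳) : ℕ :=
  sInf {d : ℕ | ∃ Y : Fin n → 𝒳, hammingDist X Y = d ∧ localSens f Y > β}

/-- The classic Propose-Test-Release algorithm: add `Lap(1/ε)` noise to `D_β(X)`;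
if the noisy distance is at most `log(1/δ)/ε`, output `⊥` (modeled as `Sum.inr ()`),
else release `f(X) + Lap(β/ε)` (as `Sum.inl _`). -/
noncomputable def classicPTR (f : (Fin n → 𝒳) → ℝ) (β ε δ : ℝ) (X : Fin n → 𝒳) :
    Measure (ℝ ⊕ Unit) :=
  (lapMeasure (distToUnsafe f β X : ℝ) (1 / ε)).bind (fun z =>
    if z ≤ Real.log (1 / δ) / ε then Measure.dirac (Sum.inr ())
    else (lapMeasure (f X) (β / ε)).map Sum.inl)

open Set

section LapLemmas

lemma lapDensity_measurable (m b : ℝ) :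
    Measurable (fun t : ℝ => ENNReal.ofReal ((1 / (2 * b)) * Real.exp (-|t - m| / b))) := by
  fun_prop

lemma density_ratio {m m' b c : ℝ} (hb : 0 < b) (hmm : |m - m'| ≤ c) (t : ℝ) :
    (1 / (2 * b)) * Real.exp (-|t - m| / b) ≤
      Real.exp (c / b) * ((1 / (2 * b)) * Real.exp (-|t - m'| / b)) := by
  have habs : |t - m'| ≤ |t - m| + c := (abs_sub_le t m m').trans (by linarith)
  calc (1 / (2 * b)) * Real.exp (-|t - m| / b)
      ≤ (1 / (2 * b)) * Real.exp (c / b + -|t - m'| / b) := by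
        gcongr
        rw [← add_div]; gcongr; linarith
    _ = Real.exp (c / b) * ((1 / (2 * b)) * Real.exp (-|t - m'| / b)) := by
        rw [Real.exp_add]; ring

lemma lap_lintegral_le {m m' b c : ℝ} (hb : 0 < b) (hmm : |m - m'| ≤ c)
    {g : ℝ → ℝ≥0∞} (hg : Measurable g) :
    ∫⁻ t, g t ∂lapMeasure m b ≤
      ENNReal.ofReal (Real.exp (c / b)) * ∫⁻ t, g t ∂lapMeasure m' b := by
  rw [lapMeasure, lapMeasure,
    lintegral_withDensity_eq_lintegral_mul _ (lapDensity_measurable m b) hg,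
    lintegral_withDensity_eq_lintegral_mul _ (lapDensity_measurable m' b) hg,
    ← lintegral_const_mul' _ _ ofReal_ne_top]
  refine lintegral_mono fun t => ?_
  simp only [Pi.mul_apply]
  rw [← mul_assoc, ← ENNReal.ofReal_mul (exp_nonneg _)]
  exact mul_le_mul_left (ofReal_le_ofReal (density_ratio hb hmm t)) _

lemma lap_apply_le {m m' b c : ℝ} (hb : 0 < b) (hmm : |m - m'| ≤ c)
    {A : Set ℝ} (hA : MeasurableSet A) :
    lapMeasure m b A ≤ ENNReal.ofReal (Real.exp (c / b)) * lapMeasure m' b A := by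
  rw [lapMeasure, lapMeasure, withDensity_apply _ hA, withDensity_apply _ hA,
    ← lintegral_const_mul' _ _ ofReal_ne_top]
  refine lintegral_mono fun t => ?_
  rw [← ENNReal.ofReal_mul (exp_nonneg _)]
  exact ofReal_le_ofReal (density_ratio hb hmm t)

lemma integral_exp_neg_mul_Ioi' {r a : ℝ} (hr : 0 < r) :
    ∫ x in Ioi a, Real.exp (-(r * x)) = r⁻¹ * Real.exp (-(r * a)) := by
  have h := integral_comp_mul_left_Ioi (fun y => Real.exp (-y)) a hr
  simp only [smul_eq_mul] at h
  rw [h, integral_exp_neg_Ioi]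

lemma integrableOn_exp_neg_mul_Ioi {r a : ℝ} (hr : 0 < r) :
    IntegrableOn (fun x : ℝ => Real.exp (-(r * x))) (Ioi a) := by
  simpa [neg_mul] using exp_neg_integrableOn_Ioi a hr

lemma lapMeasure_univ {b : ℝ} (hb : 0 < b) (m : ℝ) : lapMeasure m b Set.univ = 1 := by
  have hbi : (0:ℝ) < b⁻¹ := inv_pos.mpr hb
  set f : ℝ → ℝ := fun y => (1 / (2 * b)) * Real.exp (-(b⁻¹ * y)) with hf
  have hfeq : ∀ x : ℝ, (1 / (2 * b)) * Real.exp (-|x| / b) = f |x| := by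
    intro x
    rw [hf]
    congr 1
    rw [inv_mul_eq_div, neg_div]
  rw [lapMeasure, withDensity_apply _ MeasurableSet.univ, Measure.restrict_univ]
  have htrans := lintegral_add_right_eq_self (μ := volume)
    (fun x : ℝ => ENNReal.ofReal ((1 / (2 * b)) * Real.exp (-|x| / b))) (-m)
  simp_rw [← sub_eq_add_neg] at htrans
  rw [htrans]
  simp_rw [hfeq]
  have hIoi : IntegrableOn f (Ioi 0) := (integrableOn_exp_neg_mul_Ioi hbi).const_mul _
  have hIoiF : IntegrableOn (fun x => f |x|) (Ioi 0) :=
    hIoi.congr_fun (fun x hx => by rw [abs_of_pos hx]) measurableSet_Ioi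
  have hIic : IntegrableOn (fun x => f |x|) (Iic 0) := by
    rw [← Measure.map_neg_eq_self (volume : Measure ℝ)]
    have M : MeasurableEmbedding fun x : ℝ => -x := (Homeomorph.neg ℝ).measurableEmbedding
    rw [M.integrableOn_map_iff]
    simp_rw [Function.comp_def, abs_neg, neg_preimage, neg_Iic, neg_zero]
    exact Iff.mpr integrableOn_Ici_iff_integrableOn_Ioi hIoiF
  have hInt : Integrable (fun x => f |x|) := by
    rw [← integrableOn_univ, ← Iic_union_Ioi (a := (0:ℝ))]
    exact hIic.union hIoiF
  rw [← ofReal_integral_eq_lintegral_ofReal hInt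
    (Filter.Eventually.of_forall fun x => by rw [hf]; positivity)]
  rw [integral_comp_abs, integral_const_mul, integral_exp_neg_mul_Ioi' hbi,
    inv_inv, mul_zero, neg_zero, Real.exp_zero, mul_one]
  rw [show (2:ℝ) * (1 / (2 * b) * b) = 1 by field_simp]
  exact ofReal_one

lemma lapMeasure_tail {ε δ : ℝ} (hε : 0 < ε) (hδ : 0 < δ) (hδ1 : δ < 1) :
    lapMeasure 0 (1 / ε) (Ioi (Real.log (1 / δ) / ε)) ≤ ENNReal.ofReal δ := by
  set T := Real.log (1 / δ) / ε with hTdef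
  have hT : 0 ≤ T := div_nonneg (Real.log_nonneg (one_le_one_div hδ hδ1.le)) hε.le
  rw [lapMeasure, withDensity_apply _ measurableSet_Ioi]
  have hcongr : ∀ t ∈ Ioi T,
      ENNReal.ofReal ((1 / (2 * (1 / ε))) * Real.exp (-|t - 0| / (1 / ε)))
        = ENNReal.ofReal ((1 / (2 * (1 / ε))) * Real.exp (-(ε * t))) := by
    intro t ht
    have ht0 : 0 < t := lt_of_le_of_lt hT ht
    rw [sub_zero, abs_of_pos ht0]
    congr 2
    rw [div_eq_mul_inv, one_div, inv_inv]
    ring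
  rw [setLIntegral_congr_fun measurableSet_Ioi hcongr,
    ← ofReal_integral_eq_lintegral_ofReal ((integrableOn_exp_neg_mul_Ioi hε).const_mul _)
      (ae_of_all _ fun x => by positivity)]
  apply ofReal_le_ofReal
  rw [integral_const_mul, integral_exp_neg_mul_Ioi' hε]
  have hεT : ε * T = Real.log (1 / δ) := by rw [hTdef]; field_simp
  rw [hεT, Real.exp_neg, Real.exp_log (by positivity), one_div δ, inv_inv]
  have h2 : 1 / (2 * (1 / ε)) * (ε⁻¹ * δ) = δ / 2 := by field_simp
  rw [h2]
  linarith

end LapLemmas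

section DistLemmas

lemma distToUnsafe_sens (f : (Fin n → 𝒳) → ℝ) (β : ℝ) (X X' : Fin n → 𝒳)
    (h : hammingDist X X' ≤ 1) :
    distToUnsafe f β X ≤ distToUnsafe f β X' + 1 := by
  by_cases hne : {d : ℕ | ∃ Y : Fin n → 𝒳, hammingDist X' Y = d ∧ localSens f Y > β}.Nonempty
  · obtain ⟨Y, hY, hsens⟩ := Nat.sInf_mem hne
    have h1 : distToUnsafe f β X ≤ hammingDist X Y :=
      Nat.sInf_le ⟨Y, rfl, hsens⟩
    have h2 : hammingDist X Y ≤ hammingDist X X' + hammingDist X' Y := hammingDist_triangle _ _ _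
    have hY' : hammingDist X' Y = distToUnsafe f β X' := hY
    omega
  · have hne' : ¬ {d : ℕ | ∃ Y : Fin n → 𝒳, hammingDist X Y = d ∧ localSens f Y > β}.Nonempty := by
      rintro ⟨d, Y, -, hsens⟩
      exact hne ⟨hammingDist X' Y, Y, rfl, hsens⟩
    unfold distToUnsafe
    rw [Set.not_nonempty_iff_eq_empty] at hne'
    rw [hne', Nat.sInf_empty]
    omega

lemma localSens_le_of_one_le (f : (Fin n → 𝒳) → ℝ) (β : ℝ) (X : Fin n → 𝒳)
    (h : 1 ≤ distToUnsafe f β X) : localSens f X ≤ β := by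
  by_contra hβ'
  push_neg at hβ'
  have h0 : (0 : ℕ) ∈ {d : ℕ | ∃ Y : Fin n → 𝒳, hammingDist X Y = d ∧ localSens f Y > β} :=
    ⟨X, by simp, hβ'⟩
  have := Nat.sInf_le h0
  unfold distToUnsafe at h
  omega

lemma abs_sub_le_localSens (f : (Fin n → 𝒳) → ℝ) (X X' : Fin n → 𝒳)
    (h : hammingDist X X' ≤ 1) : |f X - f X'| ≤ localSens f X :=
  le_ciSup (Finite.bddAbove_range
    (fun Y : {Y : Fin n → 𝒳 // hammingDist X Y ≤ 1} => |f X - f Y.1|)) ⟨X', h⟩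

end DistLemmas

/-- classic Propose-Test-Release satisfies `(2ε, δ)`-DP. -/
theorem classic_ptr_dp
    (f : (Fin n → 𝒳) → ℝ) (β ε δ : ℝ) (hβ : 0 < β) (hε : 0 < ε)
    (hδ : 0 < δ) (hδ1 : δ < 1) :
    ∀ X X' : Fin n → 𝒳, hammingDist X X' ≤ 1 → ∀ S : Set (ℝ ⊕ Unit),
      MeasurableSet S →
      classicPTR f β ε δ X S ≤
        ENNReal.ofReal (Real.exp (2 * ε)) * classicPTR f β ε δ X' S +
          ENNReal.ofReal δ := by
  intro X X' hXX' S hS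
  set T := Real.log (1 / δ) / ε with hTdef
  have hb1 : (0:ℝ) < 1 / ε := by positivity
  have hb2 : (0:ℝ) < β / ε := by positivity
  set κ : (Fin n → 𝒳) → ℝ → Measure (ℝ ⊕ Unit) := fun Z z =>
    if z ≤ T then Measure.dirac (Sum.inr ())
    else (lapMeasure (f Z) (β / ε)).map Sum.inl with hκ
  have hκmeas : ∀ Z, Measurable (κ Z) := fun Z =>
    Measurable.ite measurableSet_Iic measurable_const measurable_const
  have hbind : ∀ Z, classicPTR f β ε δ Z S
      = ∫⁻ z, κ Z z S ∂lapMeasure (distToUnsafe f β Z : ℝ) (1 / ε) := fun Z =>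
    Measure.bind_apply hS (hκmeas Z).aemeasurable
  have hκle : ∀ (Z : Fin n → 𝒳) (z : ℝ), z ≤ T → κ Z z = Measure.dirac (Sum.inr ()) :=
    fun Z z hz => if_pos hz
  have hκgt : ∀ (Z : Fin n → 𝒳) (z : ℝ), ¬ z ≤ T →
      κ Z z = (lapMeasure (f Z) (β / ε)).map Sum.inl := fun Z z hz => if_neg hz
  have hgmeas : ∀ Z, Measurable (fun z => κ Z z S) := by
    intro Z
    have : (fun z => κ Z z S) = fun z =>
        if z ≤ T then Measure.dirac (Sum.inr () : ℝ ⊕ Unit) S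
        else (lapMeasure (f Z) (β / ε)).map Sum.inl S := by
      funext z
      by_cases hz : z ≤ T
      · rw [hκle Z z hz, if_pos hz]
      · rw [hκgt Z z hz, if_neg hz]
    rw [this]
    exact Measurable.ite measurableSet_Iic measurable_const measurable_const
  -- distance sensitivity
  have hDd : |((distToUnsafe f β X : ℕ) : ℝ) - ((distToUnsafe f β X' : ℕ) : ℝ)| ≤ 1 := by
    have h1 := distToUnsafe_sens f β X X' hXX'
    have h2 := distToUnsafe_sens f β X' X (by rwa [hammingDist_comm])
    rw [abs_le]
    constructor
    · have : ((distToUnsafe f β X' : ℕ) : ℝ) ≤ (distToUnsafe f β X : ℕ) + 1 := by exact_mod_cast h2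
      linarith
    · have : ((distToUnsafe f β X : ℕ) : ℝ) ≤ (distToUnsafe f β X' : ℕ) + 1 := by exact_mod_cast h1
      linarith
  have hratio1 : ENNReal.ofReal (Real.exp (1 / (1 / ε))) = ENNReal.ofReal (Real.exp ε) := by
    rw [one_div_one_div]
  have hexp2 : ENNReal.ofReal (Real.exp ε) * ENNReal.ofReal (Real.exp ε)
      = ENNReal.ofReal (Real.exp (2 * ε)) := by
    rw [← ENNReal.ofReal_mul (exp_nonneg _), ← Real.exp_add, two_mul]
  by_cases hD : 1 ≤ distToUnsafe f β X
  · -- release branch is safe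
    have hsafe : localSens f X ≤ β := localSens_le_of_one_le f β X hD
    have hfs : |f X - f X'| ≤ β := (abs_sub_le_localSens f X X' hXX').trans hsafe
    have hpt : ∀ z, κ X z S ≤ ENNReal.ofReal (Real.exp ε) * κ X' z S := by
      intro z
      rw [hκ]
      by_cases hz : z ≤ T
      · simp only [if_pos hz]
        exact le_mul_of_one_le_left zero_le
          (by rw [ENNReal.one_le_ofReal]; exact Real.one_le_exp hε.le)
      · simp only [if_neg hz]
        rw [Measure.map_apply measurable_inl hS, Measure.map_apply measurable_inl hS]
        have := lap_apply_le (c := β) hb2 hfs (measurable_inl hS)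
        rwa [show β / (β / ε) = ε by field_simp] at this
    calc classicPTR f β ε δ X S
        = ∫⁻ z, κ X z S ∂lapMeasure (distToUnsafe f β X : ℝ) (1 / ε) := hbind X
      _ ≤ ∫⁻ z, ENNReal.ofReal (Real.exp ε) * κ X' z S
            ∂lapMeasure (distToUnsafe f β X : ℝ) (1 / ε) := lintegral_mono fun z => hpt z
      _ = ENNReal.ofReal (Real.exp ε) * ∫⁻ z, κ X' z S
            ∂lapMeasure (distToUnsafe f β X : ℝ) (1 / ε) :=
          lintegral_const_mul' _ _ ofReal_ne_top
      _ ≤ ENNReal.ofReal (Real.exp ε) * (ENNReal.ofReal (Real.exp ε) *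
            ∫⁻ z, κ X' z S ∂lapMeasure (distToUnsafe f β X' : ℝ) (1 / ε)) := by
          gcongr
          have := lap_lintegral_le (c := 1) hb1 hDd (hgmeas X')
          rwa [hratio1] at this
      _ = ENNReal.ofReal (Real.exp (2 * ε)) * classicPTR f β ε δ X' S := by
          rw [← mul_assoc, hexp2, hbind X']
      _ ≤ ENNReal.ofReal (Real.exp (2 * ε)) * classicPTR f β ε δ X' S + ENNReal.ofReal δ :=
          le_self_add
  · -- D = 0 : test branch dominates
    have hD0 : distToUnsafe f β X = 0 := by omega
    have hQle : ∀ Z : Fin n → 𝒳, (lapMeasure (f Z) (β / ε)).map Sum.inl S ≤ 1 := by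
      intro Z
      rw [Measure.map_apply measurable_inl hS]
      calc lapMeasure (f Z) (β / ε) (Sum.inl ⁻¹' S)
          ≤ lapMeasure (f Z) (β / ε) Set.univ := measure_mono (Set.subset_univ _)
        _ = 1 := lapMeasure_univ hb2 _
    have hsplit : classicPTR f β ε δ X S
        = (Measure.dirac (Sum.inr () : ℝ ⊕ Unit) S) *
            lapMeasure (distToUnsafe f β X : ℝ) (1 / ε) (Iic T)
          + ((lapMeasure (f X) (β / ε)).map Sum.inl S) *
            lapMeasure (distToUnsafe f β X : ℝ) (1 / ε) (Ioi T) := by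
      rw [hbind X, ← lintegral_add_compl (fun z => κ X z S) (measurableSet_Iic (a := T)),
        compl_Iic]
      congr 1
      · rw [setLIntegral_congr_fun measurableSet_Iic
          (fun z hz => by rw [hκle X z hz]), setLIntegral_const]
      · rw [setLIntegral_congr_fun measurableSet_Ioi
          (fun z hz => by rw [hκgt X z (not_le.mpr hz)]), setLIntegral_const]
    have htail : lapMeasure (distToUnsafe f β X : ℝ) (1 / ε) (Ioi T) ≤ ENNReal.ofReal δ := by
      rw [hD0]
      exact_mod_cast lapMeasure_tail hε hδ hδ1
    have hterm2 : ((lapMeasure (f X) (β / ε)).map Sum.inl S) *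
        lapMeasure (distToUnsafe f β X : ℝ) (1 / ε) (Ioi T) ≤ ENNReal.ofReal δ := by
      calc _ ≤ 1 * ENNReal.ofReal δ := mul_le_mul' (hQle X) htail
        _ = ENNReal.ofReal δ := one_mul _
    have hterm1 : (Measure.dirac (Sum.inr () : ℝ ⊕ Unit) S) *
        lapMeasure (distToUnsafe f β X : ℝ) (1 / ε) (Iic T)
        ≤ ENNReal.ofReal (Real.exp (2 * ε)) * classicPTR f β ε δ X' S := by
      have hIic : lapMeasure (distToUnsafe f β X : ℝ) (1 / ε) (Iic T)
          ≤ ENNReal.ofReal (Real.exp ε) *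
            lapMeasure (distToUnsafe f β X' : ℝ) (1 / ε) (Iic T) := by
        have := lap_apply_le (c := 1) hb1 hDd (measurableSet_Iic (a := T))
        rwa [hratio1] at this
      have hlower : (Measure.dirac (Sum.inr () : ℝ ⊕ Unit) S) *
          lapMeasure (distToUnsafe f β X' : ℝ) (1 / ε) (Iic T) ≤ classicPTR f β ε δ X' S := by
        rw [hbind X', ← setLIntegral_const (Iic T)]
        calc ∫⁻ _ in Iic T, Measure.dirac (Sum.inr () : ℝ ⊕ Unit) S
              ∂lapMeasure (distToUnsafe f β X' : ℝ) (1 / ε)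
            = ∫⁻ z in Iic T, κ X' z S ∂lapMeasure (distToUnsafe f β X' : ℝ) (1 / ε) :=
              setLIntegral_congr_fun measurableSet_Iic
                (fun z hz => by rw [hκle X' z hz])
          _ ≤ ∫⁻ z, κ X' z S ∂lapMeasure (distToUnsafe f β X' : ℝ) (1 / ε) :=
              setLIntegral_le_lintegral _ _
      calc (Measure.dirac (Sum.inr () : ℝ ⊕ Unit) S) *
            lapMeasure (distToUnsafe f β X : ℝ) (1 / ε) (Iic T)
          ≤ (Measure.dirac (Sum.inr () : ℝ ⊕ Unit) S) *
            (ENNReal.ofReal (Real.exp ε) *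
              lapMeasure (distToUnsafe f β X' : ℝ) (1 / ε) (Iic T)) := mul_le_mul' le_rfl hIic
        _ = ENNReal.ofReal (Real.exp ε) * ((Measure.dirac (Sum.inr () : ℝ ⊕ Unit) S) *
              lapMeasure (distToUnsafe f β X' : ℝ) (1 / ε) (Iic T)) := by ring
        _ ≤ ENNReal.ofReal (Real.exp (2 * ε)) * classicPTR f β ε δ X' S := by
            apply mul_le_mul'
            · exact ofReal_le_ofReal (Real.exp_le_exp.mpr (by linarith))
            · exact hlower
    rw [hsplit]
    exact add_le_add hterm1 hterm2
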